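/- Nonempty denominator forces infinite support (content of Corollary 3.9): Let T ⊆ ℕ^N∖{0} be a finite nonempty set, n : T → ℕ with only positive values, μ₁,…,μ_m ∈ V lying in pairwise distinct cosets of Q, and f₁,…,f_m ∈ ℤ[x₁,…,x_N] such that for every d ∈ T there is some i with b_d ∤ f_i. If x ∈ 𝒳 satisfies x · ∏_{d∈T} b_d^{n(d)} = ∑_{i=1}^m e^{μ_i}·f_i in 𝒳, then x has infinite support. (Hence a nonzero module in category O is finite dimensional if and only if the denominator of the reduced rational form of its formal character equals 1, i.e. its set of denominator roots is empty.) -/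

import Mathlib

/-!
If `x` had finite support it would lie in the group ring `ℤ[V]`, which is graded by `V ⧸ Q`.
The denominator `∏ b_d^{n(d)}` has degree `0` and the summands `e^{μ_i} f_i` lie in pairwise
distinct degrees, so the component of `x` of degree `μ_i + Q`, shifted by `e^{-μ_i}` and then by
a monomial large enough to clear all negative exponents, yields a polynomial identity
`g · ∏ b_d^{n(d)} = X^M f_i`. As `b_d` has constant term `1`, it is prime to every variable,
hence `b_d ∣ f_i`.
-/

open Function MvPolynomial

noncomputable section

variable {V : Type*} [AddCommGroup V] [Module ℝ V]

/-- The positive cone `Q⁺` generated by the simple roots `α`. -/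
def Qplus {N : ℕ} (α : Fin N → V) : Set V :=
  {v | ∃ n : Fin N → ℕ, v = ∑ i, n i • α i}

/-- The root lattice `Q` generated by the simple roots `α`. -/
def Qlat {N : ℕ} (α : Fin N → V) : Set V :=
  {v | ∃ n : Fin N → ℤ, v = ∑ i, n i • α i}

/-- A subset of `V` is lower-finite if it is contained in a finite union
of sets of the form `ν - Q⁺` with `ν ∈ V`. -/
def LowerFinite {N : ℕ} (α : Fin N → V) (A : Set V) : Prop :=
  ∃ s : Finset V, A ⊆ ⋃ ν ∈ s, {x | ∃ q ∈ Qplus α, x = ν - q}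

/-- `e μ` : the indicator function of `μ`, i.e. the element `e^μ` of the character ring. -/
def e (μ : V) : V → ℤ := Set.indicator {μ} 1

/-- Convolution product on the character ring: `(f·g)(λ) = ∑_{μ+η=λ} f(μ)g(η)`. -/
def conv (f g : V → ℤ) : V → ℤ := fun l => ∑ᶠ μ, f μ * g (l - μ)

open scoped Classical in
/-- The map `ℤ[x₁,…,x_N] → 𝒳` determined by sending `xᵢ` to `e^{-αᵢ}`. -/
def polyToChar {N : ℕ} (α : Fin N → V) (p : MvPolynomial (Fin N) ℤ) : V → ℤ :=
  fun v => ∑ᶠ d : Fin N →₀ ℕ, if v = -(∑ i, d i • α i) then coeff d p else 0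

/-- The binomial `b_d = 1 - X^d` in `ℤ[x₁,…,x_N]`. -/
def bd {N : ℕ} (d : Fin N → ℕ) : MvPolynomial (Fin N) ℤ :=
  1 - ∏ i, X i ^ d i

open AddMonoidAlgebra

section Monomial

variable {σ R : Type*} [CommRing R] [IsDomain R] [UniqueFactorizationMonoid R]

theorem MvPolynomial.isRelPrime_monomial_one {a : MvPolynomial σ R} (ha : ∀ j, ¬ X j ∣ a)
    (M : σ →₀ ℕ) : IsRelPrime a (monomial M 1) := by
  rw [monomial_eq, C_1, one_mul, Finsupp.prod]
  exact IsRelPrime.prod_right fun j _ =>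
    ((X_prime.irreducible.isRelPrime_iff_not_dvd).mpr (ha j)).symm.pow_right

end Monomial

section Binomial

variable {N : ℕ} {d : Fin N → ℕ}

theorem constantCoeff_bd (hd : d ≠ 0) : constantCoeff (bd d) = 1 := by
  obtain ⟨i, hi⟩ := Function.ne_iff.mp hd
  rw [bd, map_sub, map_one, map_prod, sub_eq_self]
  exact Finset.prod_eq_zero (Finset.mem_univ i) (by rw [map_pow, constantCoeff_X, zero_pow hi])

theorem not_X_dvd_bd (hd : d ≠ 0) (j : Fin N) : ¬ X j ∣ bd d := by
  rintro ⟨q, hq⟩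
  simpa [hq] using constantCoeff_bd hd

theorem bd_dvd_of_dvd_monomial_mul (hd : d ≠ 0) {M : Fin N →₀ ℕ} {f : MvPolynomial (Fin N) ℤ}
    (h : bd d ∣ monomial M 1 * f) : bd d ∣ f :=
  (isRelPrime_monomial_one (not_X_dvd_bd hd) M).dvd_of_dvd_mul_left h

end Binomial

section RootLattice

variable {G : Type*} [AddCommGroup G] {N : ℕ} (α : Fin N → G)

def negRootHom : (Fin N →₀ ℕ) →+ G where
  toFun d := -∑ i, d i • α i
  map_zero' := by simp
  map_add' d₁ d₂ := by simp only [Finsupp.coe_add, Pi.add_apply, add_smul,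
    Finset.sum_add_distrib, neg_add]

theorem negRootHom_apply (d : Fin N →₀ ℕ) : negRootHom α d = -∑ i, d i • α i := rfl

theorem negRootHom_eq_sum_zsmul (d : Fin N →₀ ℕ) :
    negRootHom α d = ∑ i, (-(d i : ℤ)) • α i := by
  simp only [negRootHom_apply, neg_smul, natCast_zsmul, Finset.sum_neg_distrib]

variable {α} in
theorem negRootHom_injective [Module ℝ G] (hα : LinearIndependent ℝ α) :
    Injective (negRootHom α) := by
  intro d₁ d₂ h
  rw [negRootHom_apply, negRootHom_apply, neg_inj] at h
  have hsub : ∑ i, ((d₁ i : ℝ) - d₂ i) • α i = 0 := by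
    simp only [sub_smul, Finset.sum_sub_distrib, Nat.cast_smul_eq_nsmul, h, sub_self]
  ext i
  exact_mod_cast sub_eq_zero.mp (Fintype.linearIndependent_iff.mp hα _ hsub i)

def rootLattice : AddSubgroup G := (Submodule.span ℤ (Set.range α)).toAddSubgroup

theorem mem_rootLattice_iff {v : G} : v ∈ rootLattice α ↔ v ∈ Qlat α := by
  rw [rootLattice, Submodule.mem_toAddSubgroup, Submodule.mem_span_range_iff_exists_fun]
  exact exists_congr fun _ => eq_comm

theorem negRootHom_mem_rootLattice (d : Fin N →₀ ℕ) : negRootHom α d ∈ rootLattice α :=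
  (mem_rootLattice_iff α).mpr ⟨_, negRootHom_eq_sum_zsmul α d⟩

theorem exists_negRootHom_add_mem_mrange {v : G} (hv : v ∈ rootLattice α) :
    ∃ b, negRootHom α b + v ∈ AddMonoidHom.mrange (negRootHom α) := by
  obtain ⟨c, rfl⟩ := (mem_rootLattice_iff α).mp hv
  refine ⟨Finsupp.equivFunOnFinite.symm fun i => (c i).toNat,
    Finsupp.equivFunOnFinite.symm fun i => (-c i).toNat, ?_⟩
  simp only [negRootHom_eq_sum_zsmul, ← Finset.sum_add_distrib, ← add_smul]
  refine Finset.sum_congr rfl fun i _ => congrArg (· • α i) ?_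
  simp only [Finsupp.coe_equivFunOnFinite_symm]
  omega

theorem exists_negRootHom_add_mem_mrange_of_subset (s : Finset G)
    (hs : ↑s ⊆ (rootLattice α : Set G)) :
    ∃ b, ∀ v ∈ s, negRootHom α b + v ∈ AddMonoidHom.mrange (negRootHom α) := by
  classical
  induction s using Finset.induction_on with
  | empty => exact ⟨0, by simp⟩
  | insert v s _ ih =>
    rw [Finset.coe_insert, Set.insert_subset_iff] at hs
    obtain ⟨b, hb⟩ := ih hs.2
    obtain ⟨b', hb'⟩ := exists_negRootHom_add_mem_mrange α hs.1
    refine ⟨b + b', fun w hw => ?_⟩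
    rcases Finset.mem_insert.mp hw with rfl | hw
    · rw [map_add, add_assoc]
      exact add_mem ⟨b, rfl⟩ hb'
    · rw [map_add, add_right_comm]
      exact add_mem (hb w hw) ⟨b', rfl⟩

end RootLattice

section Grading

variable {R G ι κ : Type*} [CommSemiring R] [AddCommGroup G] [AddCommMonoid ι] [DecidableEq ι]
  [Fintype κ]

theorem mem_gradeBy_mk_zero_iff (L : AddSubgroup G) (a : AddMonoidAlgebra R G) :
    a ∈ gradeBy R (QuotientAddGroup.mk' L) 0 ↔ ↑a.coeff.support ⊆ (L : Set G) := by
  simp only [mem_gradeBy_iff, Set.subset_def, Set.mem_preimage, Set.mem_singleton_iff,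
    QuotientAddGroup.mk'_apply, QuotientAddGroup.eq_zero_iff, SetLike.mem_coe]

theorem coe_decompose_mul_eq_of_eq_sum (π : G →+ ι) {y z : AddMonoidAlgebra R G}
    (hz : z ∈ gradeBy R π 0) {c : κ → G} (hc : Injective (π ∘ c)) {w : κ → AddMonoidAlgebra R G}
    (hw : ∀ j, w j ∈ gradeBy R π 0) (h : y * z = ∑ j, single (c j) 1 * w j) (i : κ) :
    (DirectSum.decompose (gradeBy R π) y (π (c i)) : AddMonoidAlgebra R G) * z =
      single (c i) 1 * w i := by
  have hmem : ∀ j, single (c j) 1 * w j ∈ gradeBy R π (π (c j)) := fun j => by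
    simpa using SetLike.GradedMul.mul_mem (single_mem_gradeBy π (c j) (1 : R)) (hw j)
  rw [← DirectSum.coe_decompose_mul_of_right_mem_zero _ hz, h, DirectSum.decompose_sum,
    DFinsupp.finsetSum_apply, AddSubmonoidClass.coe_finsetSum,
    Finset.sum_eq_single i, DirectSum.decompose_of_mem_same _ (hmem i)]
  · exact fun j _ hji => DirectSum.decompose_of_mem_ne _ (hmem j) (hc.ne hji)
  · simp

end Grading

section CharHom

variable {G : Type*} [AddCommGroup G] {N : ℕ} (α : Fin N → G)

def charHom : MvPolynomial (Fin N) ℤ →+* AddMonoidAlgebra ℤ G :=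
  mapDomainRingHom ℤ (negRootHom α)

theorem charHom_monomial (M : Fin N →₀ ℕ) (r : ℤ) :
    charHom α (monomial M r) = single (negRootHom α M) r := by
  rw [charHom, mapDomainRingHom_apply, ← single_eq_monomial, mapDomain_single]

variable {α} in
theorem charHom_injective [Module ℝ G] (hα : LinearIndependent ℝ α) : Injective (charHom α) :=
  mapDomain_injective (negRootHom_injective hα)

theorem charHom_mem_gradeBy_zero (p : MvPolynomial (Fin N) ℤ) :
    charHom α p ∈ gradeBy ℤ (QuotientAddGroup.mk' (rootLattice α)) 0 := by
  classical
  rw [mem_gradeBy_mk_zero_iff, charHom, mapDomainRingHom_apply, coeff_mapDomain]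
  intro v hv
  obtain ⟨d, -, rfl⟩ := Finset.mem_image.mp (Finsupp.mapDomain_support hv)
  exact negRootHom_mem_rootLattice α d

theorem exists_single_mul_eq_charHom [Module ℝ G] (hα : LinearIndependent ℝ α)
    {y : AddMonoidAlgebra ℤ G} (hy : ↑y.coeff.support ⊆ (rootLattice α : Set G)) :
    ∃ M g, single (negRootHom α M) 1 * y = charHom α g := by
  obtain ⟨M, hM⟩ := exists_negRootHom_add_mem_mrange_of_subset α _ hy
  have hsupp : ↑(single (negRootHom α M) 1 * y).coeff.support ⊆ Set.range (negRootHom α) := by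
    intro v hv
    rw [Finset.mem_coe, Finsupp.mem_support_iff, coeff_single_mul_apply, one_mul] at hv
    simpa using hM _ (Finsupp.mem_support_iff.mpr hv)
  exact ⟨M, comapDomain _ (negRootHom_injective hα) _, (mapDomain_comapDomain hsupp _).symm⟩

theorem exists_mul_eq_monomial_mul [Module ℝ G] (hα : LinearIndependent ℝ α) {m : ℕ}
    {μ : Fin m → G} (hμ : ∀ i j, i ≠ j → μ i - μ j ∉ Qlat α) {y : AddMonoidAlgebra ℤ G}
    {P : MvPolynomial (Fin N) ℤ} {f : Fin m → MvPolynomial (Fin N) ℤ}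
    (h : y * charHom α P = ∑ j, single (μ j) 1 * charHom α (f j)) (i : Fin m) :
    ∃ g M, g * P = monomial M 1 * f i := by
  classical
  set π := QuotientAddGroup.mk' (rootLattice α)
  have hπμ : Injective (π ∘ μ) := fun j k hjk => by
    by_contra hne
    exact hμ j k hne ((mem_rootLattice_iff α).mp (QuotientAddGroup.eq_iff_sub_mem.mp hjk))
  set yi : AddMonoidAlgebra ℤ G := (DirectSum.decompose (gradeBy ℤ π) y (π (μ i)) :)
  have hyi : yi * charHom α P = single (μ i) 1 * charHom α (f i) :=
    coe_decompose_mul_eq_of_eq_sum π (charHom_mem_gradeBy_zero α P) hπμ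
      (fun j => charHom_mem_gradeBy_zero α (f j)) h i
  have hY : single (-μ i) 1 * yi ∈ gradeBy ℤ π 0 := by
    simpa using SetLike.GradedMul.mul_mem (single_mem_gradeBy π (-μ i) (1 : ℤ))
      (DirectSum.decompose (gradeBy ℤ π) y (π (μ i))).2
  obtain ⟨M, g, hg⟩ := exists_single_mul_eq_charHom α hα ((mem_gradeBy_mk_zero_iff _ _).mp hY)
  refine ⟨g, M, charHom_injective hα ?_⟩
  rw [map_mul, map_mul, ← hg, charHom_monomial, mul_assoc, mul_assoc, hyi,
    ← mul_assoc (single (-μ i) 1), single_mul_single, neg_add_cancel, one_mul,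
    ← AddMonoidAlgebra.one_def, one_mul]

end CharHom

section CharacterRing

variable {G : Type*} [AddCommGroup G]

theorem conv_coeff_eq_coeff_mul (a b : AddMonoidAlgebra ℤ G) :
    conv ⇑a.coeff ⇑b.coeff = ⇑(a * b).coeff := by
  funext l
  have hsupp : support (fun μ => a.coeff μ * b.coeff (l - μ)) ⊆ ↑a.coeff.support :=
    fun μ hμ => Finsupp.mem_support_iff.mpr (left_ne_zero_of_mul hμ)
  rw [conv, finsum_eq_finsetSum_of_support_subset _ hsupp, coeff_mul_apply_left, Finsupp.sum]
  simp only [neg_add_eq_sub]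

theorem e_eq_coeff_single {M : Type*} (μ : M) : e μ = ⇑(single μ (1 : ℤ)).coeff := by
  classical
  funext v
  rw [e, Set.indicator_apply, coeff_single, Finsupp.single_apply]
  simp [eq_comm]

theorem polyToChar_eq_coeff_charHom {N : ℕ} (α : Fin N → G) (p : MvPolynomial (Fin N) ℤ) :
    polyToChar α p = ⇑(charHom α p).coeff := by
  classical
  funext v
  have hsupp : support (fun d : Fin N →₀ ℕ => if v = -∑ i, d i • α i then coeff d p else 0) ⊆
      ↑p.support := fun d hd => by
    by_contra h
    simp_all [MvPolynomial.mem_support_iff]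
  rw [polyToChar, finsum_eq_finsetSum_of_support_subset _ hsupp, charHom, mapDomainRingHom_apply,
    coeff_mapDomain, Finsupp.mapDomain, Finsupp.sum_apply, Finsupp.sum]
  refine Finset.sum_congr rfl fun d _ => ?_
  rw [Finsupp.single_apply, negRootHom_apply]
  exact if_congr eq_comm rfl rfl

end CharacterRing

theorem nonempty_denominator_forces_infinite_support_general
    {N : ℕ} (α : Fin N → V) (hα : LinearIndependent ℝ α)
    (T : Finset (Fin N → ℕ)) (hTne : T.Nonempty) (hT0 : ∀ d ∈ T, d ≠ 0)
    (n : (Fin N → ℕ) → ℕ) (hn : ∀ d ∈ T, 0 < n d)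
    {m : ℕ} (μ : Fin m → V) (hμ : ∀ i j, i ≠ j → μ i - μ j ∉ Qlat α)
    (f : Fin m → MvPolynomial (Fin N) ℤ)
    (hfred : ∀ d ∈ T, ∃ i, ¬ bd d ∣ f i)
    (x : V → ℤ)
    (heq : conv x (polyToChar α (∏ d ∈ T, bd d ^ n d))
         = ∑ i, conv (e (μ i)) (polyToChar α (f i))) :
    (Function.support x).Infinite := by
  intro hfin
  set y : AddMonoidAlgebra ℤ V := ofCoeff (Finsupp.ofSupportFinite x hfin)
  have hy : y * charHom α (∏ d ∈ T, bd d ^ n d) = ∑ i, single (μ i) 1 * charHom α (f i) := by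
    rw [show x = ⇑y.coeff from rfl] at heq
    simp only [polyToChar_eq_coeff_charHom, e_eq_coeff_single, conv_coeff_eq_coeff_mul] at heq
    refine coeff_injective (DFunLike.coe_injective ?_)
    rwa [AddMonoidAlgebra.coeff_sum, Finsupp.coe_finsetSum]
  obtain ⟨d, hdT⟩ := hTne
  obtain ⟨i, hfi⟩ := hfred d hdT
  obtain ⟨g, M, hgM⟩ := exists_mul_eq_monomial_mul α hα hμ hy i
  have hdvd : bd d ∣ ∏ d ∈ T, bd d ^ n d :=
    (dvd_pow_self _ (hn d hdT).ne').trans (Finset.dvd_prod_of_mem _ hdT)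
  exact hfi (bd_dvd_of_dvd_monomial_mul (hT0 d hdT) (hgM ▸ hdvd.mul_left g))

/-- content of Corollary 3.9: if the reduced rational form of an
element of `𝒳` has a nonempty set of denominator roots, then that element has
infinite support. -/
theorem nonempty_denominator_forces_infinite_support
    {N : ℕ} (α : Fin N → V) (hα : LinearIndependent ℝ α)
    (T : Finset (Fin N → ℕ)) (hTne : T.Nonempty) (hT0 : ∀ d ∈ T, d ≠ 0)
    (n : (Fin N → ℕ) → ℕ) (hn : ∀ d ∈ T, 0 < n d)
    {m : ℕ} (μ : Fin m → V) (hμ : ∀ i j, i ≠ j → μ i - μ j ∉ Qlat α)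
    (f : Fin m → MvPolynomial (Fin N) ℤ)
    (hfred : ∀ d ∈ T, ∃ i, ¬ bd d ∣ f i)
    (x : V → ℤ) (hx : LowerFinite α (Function.support x))
    (heq : conv x (polyToChar α (∏ d ∈ T, bd d ^ n d))
         = ∑ i, conv (e (μ i)) (polyToChar α (f i))) :
    (Function.support x).Infinite :=
  nonempty_denominator_forces_infinite_support_general α hα T hTne hT0 n hn μ hμ f hfred x heq
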